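/- Let n ≥ 3 and let CH_n be the closed helm graph obtained from the helm graph H_n by joining its n pendant vertices into a cycle C_n. Then the chromatic curling number of CH_n equals n if n is even and n−1 if n is odd. -/

import Mathlib

open SimpleGraph Finset

/-- A proper vertex colouring of `G` with colour set `Fin k`. -/
def IsProperColoring {V : Type*} (G : SimpleGraph V) {k : ℕ} (C : V → Fin k) : Prop :=
  ∀ ⦃v w⦄, G.Adj v w → C v ≠ C w

/-- The chromatic number of `G`, as a natural number. -/
noncomputable def chi {V : Type*} (G : SimpleGraph V) : ℕ :=
  G.chromaticNumber.toNat

/-- θ(cᵢ): the number of vertices receiving colour `i` under the colouring `C`. -/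
def theta {V : Type*} [Fintype V] {k : ℕ} (C : V → Fin k) (i : Fin k) : ℕ :=
  (Finset.univ.filter fun v => C v = i).card

/-- The list of colour class sizes of `C`, sorted in descending order. -/
def classSizesDesc {V : Type*} [Fintype V] {k : ℕ} (C : V → Fin k) : List ℕ :=
  (List.insertionSort (· ≤ ·) (List.ofFn fun i => theta C i)).reverse

/-- A χ⁻-colouring of `G`: a proper colouring with exactly χ(G) colours such that,
greedily, the colour class of `c₁` is as large as possible, then the colour class of
`c₂` is as large as possible among the remaining vertices, and so on; equivalently,
the descending sequence of colour class sizes is lexicographically maximal among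
all proper colourings with χ(G) colours. -/
def IsChiMinusColoring {V : Type*} [Fintype V] (G : SimpleGraph V)
    (C : V → Fin (chi G)) : Prop :=
  IsProperColoring G C ∧
    ∀ C' : V → Fin (chi G), IsProperColoring G C' →
      ¬ List.Lex (· < ·) (classSizesDesc C) (classSizesDesc C')

/-- The closed helm graph `CHₙ`: the helm graph `Hₙ` (rim vertices `some (v, false)`,
central vertex `none`, pendant vertices `some (v, true)`) together with edges joining
the pendant vertices into a cycle matching the cyclic order of the rim. -/
def closedHelmG (n : ℕ) : SimpleGraph (Option (Fin n × Bool)) :=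
  SimpleGraph.fromRel (fun a b =>
    match a, b with
    | some (v, false), some (w, false) => w.val = (v.val + 1) % n
    | some (v, false), some (w, true) => w = v
    | some (v, true), some (w, true) => w.val = (v.val + 1) % n
    | none, some (_, false) => True
    | _, _ => False)

set_option linter.unreachableTactic false
set_option linter.unusedTactic false
set_option linter.unusedVariables false

lemma succMod {n v : ℕ} (h : v < n) : (v + 1) % n = v + 1 ∨ ((v + 1) % n = 0 ∧ v + 1 = n) := by
  rcases lt_or_eq_of_le (Nat.succ_le_of_lt h) with h' | h'
  · exact Or.inl (Nat.mod_eq_of_lt h')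
  · have h'' : v + 1 = n := h'
    exact Or.inr ⟨by rw [h'', Nat.mod_self], h''⟩

lemma succMod_ne {n v : ℕ} (h : v < n) (hn : 2 ≤ n) : (v + 1) % n ≠ v := by
  rcases succMod h with h' | ⟨h', h''⟩ <;> omega

-- adjacency lemmas

lemma adj_hub_rim {n : ℕ} (v : Fin n) : (closedHelmG n).Adj none (some (v, false)) := by
  rw [closedHelmG, SimpleGraph.fromRel_adj]
  exact ⟨by simp, Or.inl trivial⟩

lemma adj_rim_outer {n : ℕ} (v : Fin n) :
    (closedHelmG n).Adj (some (v, false)) (some (v, true)) := by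
  rw [closedHelmG, SimpleGraph.fromRel_adj]
  exact ⟨by simp, Or.inl rfl⟩

lemma adj_rim_rim {n : ℕ} (hn : 2 ≤ n) (v w : Fin n) (h : w.val = (v.val + 1) % n) :
    (closedHelmG n).Adj (some (v, false)) (some (w, false)) := by
  rw [closedHelmG, SimpleGraph.fromRel_adj]
  refine ⟨?_, Or.inl h⟩
  simp only [ne_eq, Option.some.injEq, Prod.mk.injEq, and_true]
  intro hvw
  exact succMod_ne v.isLt hn (hvw ▸ h.symm)

lemma adj_outer_outer {n : ℕ} (hn : 2 ≤ n) (v w : Fin n) (h : w.val = (v.val + 1) % n) :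
    (closedHelmG n).Adj (some (v, true)) (some (w, true)) := by
  rw [closedHelmG, SimpleGraph.fromRel_adj]
  refine ⟨?_, Or.inl h⟩
  simp only [ne_eq, Option.some.injEq, Prod.mk.injEq, and_true]
  intro hvw
  exact succMod_ne v.isLt hn (hvw ▸ h.symm)

-- parity helpers

lemma parity_flip (P : ℕ → Prop) (h : ∀ i, P i ↔ ¬ P (i + 1)) (n : ℕ)
    (hw : P n ↔ P 0) (hodd : n % 2 = 1) : False := by
  have key : ∀ i, ((P i ↔ P 0) ↔ i % 2 = 0) := by
    intro i
    induction i with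
    | zero => simp
    | succ i ih =>
      have hi := h i
      have h2 : (i + 1) % 2 = 0 ↔ ¬ (i % 2 = 0) := by omega
      rw [h2, ← ih]
      rw [hi] at ih ⊢
      tauto
  have := (key n).mp hw
  omega

lemma parity_num (A : ℕ → ℕ) (c : ℕ) (hb : ∀ i, A i < 3) (hc : c < 3)
    (hne : ∀ i, A i ≠ c) (hstep : ∀ i, A i ≠ A (i + 1)) (n : ℕ)
    (hw : A n = A 0) (hodd : n % 2 = 1) : False := by
  have key : ∀ i, A i = if i % 2 = 0 then A 0 else 3 - c - A 0 := by
    intro i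
    induction i with
    | zero => simp
    | succ i ih =>
      have h1 := hb i; have h2 := hb (i+1); have h3 := hne i; have h4 := hne (i+1)
      have h5 := hstep i; have h6 := hb 0; have h7 := hne 0
      split at ih <;> split <;> omega
  have h1 := key n
  have h6 := hb 0; have h7 := hne 0
  rw [hw] at h1
  split at h1 <;> omega

def helmRel (n : ℕ) : Option (Fin n × Bool) → Option (Fin n × Bool) → Prop := fun a b =>
    match a, b with
    | some (v, false), some (w, false) => w.val = (v.val + 1) % n
    | some (v, false), some (w, true) => w = v
    | some (v, true), some (w, true) => w.val = (v.val + 1) % n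
    | none, some (_, false) => True
    | _, _ => False

lemma closedHelmG_eq (n : ℕ) : closedHelmG n = SimpleGraph.fromRel (helmRel n) := rfl

def evenColoring (n : ℕ) : Option (Fin n × Bool) → Fin 3 := fun v =>
  match v with
  | none => 2
  | some (j, false) => if j.val % 2 = 0 then 0 else 1
  | some (j, true) => if j.val % 2 = 0 then 1 else 0

lemma evenColoring_proper {n : ℕ} (hn : 3 ≤ n) (hpar : Even n) :
    IsProperColoring (closedHelmG n) (evenColoring n) := by
  have hn2 : n % 2 = 0 := Nat.even_iff.mp hpar
  have key : ∀ a b, helmRel n a b → evenColoring n a ≠ evenColoring n b := by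
    rintro (_ | ⟨j, _ | _⟩) (_ | ⟨j', _ | _⟩) h <;> dsimp only [helmRel] at h <;>
      first
      | exact h.elim
      | (rcases succMod j.isLt with h' | ⟨h', h''⟩ <;>
          (have hjl := j.isLt; have hjl' := j'.isLt;
           simp only [evenColoring]; split_ifs <;> first | decide | (exfalso; omega)))
      | (cases h; simp only [evenColoring]; split_ifs <;> first | decide | (exfalso; omega))
      | (simp only [evenColoring]; split_ifs <;> first | decide | (exfalso; omega))
  intro v w hadj
  rw [closedHelmG_eq, SimpleGraph.fromRel_adj] at hadj
  obtain ⟨hne, h | h⟩ := hadj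
  · exact key v w h
  · exact (key w v h).symm

def oddColoring (n : ℕ) : Option (Fin n × Bool) → Fin 4 := fun v =>
  match v with
  | none => 3
  | some (j, false) => if j.val = n - 1 then 2 else if j.val % 2 = 0 then 0 else 1
  | some (j, true) => if j.val = n - 1 then 3 else if j.val % 2 = 1 then 0 else 1

lemma oddColoring_proper {n : ℕ} (hn : 3 ≤ n) (hpar : ¬ Even n) :
    IsProperColoring (closedHelmG n) (oddColoring n) := by
  have hn2 : n % 2 = 1 := Nat.odd_iff.mp (Nat.not_even_iff_odd.mp hpar)
  have key : ∀ a b, helmRel n a b → oddColoring n a ≠ oddColoring n b := by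
    rintro (_ | ⟨j, _ | _⟩) (_ | ⟨j', _ | _⟩) h <;> dsimp only [helmRel] at h <;>
      first
      | exact h.elim
      | (rcases succMod j.isLt with h' | ⟨h', h''⟩ <;>
          (have hjl := j.isLt; have hjl' := j'.isLt;
           simp only [oddColoring]; split_ifs <;> first | decide | (exfalso; omega)))
      | (cases h; simp only [oddColoring]; split_ifs <;> first | decide | (exfalso; omega))
      | (simp only [oddColoring]; split_ifs <;> first | decide | (exfalso; omega))
  intro v w hadj
  rw [closedHelmG_eq, SimpleGraph.fromRel_adj] at hadj
  obtain ⟨hne, h | h⟩ := hadj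
  · exact key v w h
  · exact (key w v h).symm

def shft {n : ℕ} (hn : 0 < n) (j : Fin n) : Fin n :=
  ⟨(j.val + 1) % n, Nat.mod_lt _ hn⟩

lemma shft_injOn {n : ℕ} (hn : 0 < n) : Function.Injective (shft hn) := by
  intro a b hab
  have h : (a.val + 1) % n = (b.val + 1) % n := congrArg Fin.val hab
  have ha := a.isLt; have hb := b.isLt
  rcases succMod ha with h1 | ⟨h1, h1'⟩ <;> rcases succMod hb with h2 | ⟨h2, h2'⟩ <;>
    (apply Fin.ext; omega)

lemma indep_bound (hn : 3 ≤ n) (C : Option (Fin n × Bool) → Fin k)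
    (hC : IsProperColoring (closedHelmG n) C) (i : Fin k) :
    theta C i ≤ if Even n then n else n - 1 := by
  classical
  set S : Finset (Option (Fin n × Bool)) := Finset.univ.filter (fun v => C v = i) with hS
  have hSmem : ∀ v, v ∈ S ↔ C v = i := by intro v; simp [hS]
  have hind : ∀ a ∈ S, ∀ b ∈ S, ¬ (closedHelmG n).Adj a b := by
    intro a ha b hb hab
    exact hC hab (((hSmem a).mp ha).trans ((hSmem b).mp hb).symm)
  set T : Bool → Finset (Fin n) := fun b => Finset.univ.filter (fun j => some (j, b) ∈ S) with hT
  have hTmem : ∀ b j, j ∈ T b ↔ some (j, b) ∈ S := by intro b j; simp [hT]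
  -- cycle bound for each layer
  have cyc : ∀ b, 2 * (T b).card ≤ n := by
    intro b
    have hinj : ∀ j ∈ T b, shft (by omega) j ∈ (T b)ᶜ := by
      intro j hj
      rw [Finset.mem_compl]
      intro hj'
      refine hind _ ((hTmem b j).mp hj) _ ((hTmem b _).mp hj') ?_
      cases b
      · exact adj_rim_rim (by omega) _ _ rfl
      · exact adj_outer_outer (by omega) _ _ rfl
    have hcard : (T b).card ≤ ((T b)ᶜ).card :=
      Finset.card_le_card_of_injOn _ hinj ((shft_injOn (by omega)).injOn)
    have := Finset.card_compl (T b)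
    simp [Fintype.card_fin] at this
    omega
  -- disjointness of layers
  have hdisj : ∀ j, ¬ (j ∈ T false ∧ j ∈ T true) := by
    rintro j ⟨h1, h2⟩
    exact hind _ ((hTmem false j).mp h1) _ ((hTmem true j).mp h2) (adj_rim_outer j)
  -- split on hub
  by_cases hhub : none ∈ S
  · -- no rim vertices
    have hrim : T false = ∅ := by
      rw [Finset.eq_empty_iff_forall_notMem]
      intro j hj
      exact hind _ hhub _ ((hTmem false j).mp hj) (adj_hub_rim j)
    -- S ⊆ insert none (image of T true)
    have hsub : S ⊆ insert none ((T true).image (fun j => some (j, true))) := by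
      intro v hv
      match v with
      | none => exact Finset.mem_insert_self _ _
      | some (j, false) =>
        exact absurd ((hTmem false j).mpr hv) (by rw [hrim]; simp)
      | some (j, true) =>
        exact Finset.mem_insert_of_mem (Finset.mem_image_of_mem _ ((hTmem true j).mpr hv))
    have hcard := Finset.card_le_card hsub
    have h2 := Finset.card_insert_le (none : Option (Fin n × Bool))
      ((T true).image (fun j => some (j, true)))
    have h3 := Finset.card_image_le (s := T true) (f := fun j => some (j, true))
    have h4 := cyc true
    have h5 : theta C i = S.card := rfl
    split <;> omega
  · -- every vertex of S is some (j, b); S injects into layers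
    have hsub : S ⊆ ((T false).image (fun j => some (j, false))) ∪
        ((T true).image (fun j => some (j, true))) := by
      intro v hv
      match v with
      | none => exact absurd hv hhub
      | some (j, false) =>
        exact Finset.mem_union_left _ (Finset.mem_image_of_mem _ ((hTmem false j).mpr hv))
      | some (j, true) =>
        exact Finset.mem_union_right _ (Finset.mem_image_of_mem _ ((hTmem true j).mpr hv))
    have hinjf : Set.InjOn (fun j : Fin n => some (j, false)) (T false) := by
      intro a _ b _ h; simpa using h
    have hinjt : Set.InjOn (fun j : Fin n => some (j, true)) (T true) := by
      intro a _ b _ h; simpa using h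
    have hcard := Finset.card_le_card hsub
    have h2 := Finset.card_union_le ((T false).image (fun j => some (j, false)))
      ((T true).image (fun j => some (j, true)))
    rw [Finset.card_image_of_injOn hinjf, Finset.card_image_of_injOn hinjt] at h2
    -- |T false| + |T true| ≤ n since disjoint
    have hdisj' : Disjoint (T false) (T true) := by
      rw [Finset.disjoint_left]
      intro j h1 h2
      exact hdisj j ⟨h1, h2⟩
    have hun : (T false).card + (T true).card ≤ n := by
      rw [← Finset.card_union_of_disjoint hdisj']
      have := Finset.card_le_card (Finset.subset_univ ((T false) ∪ (T true)))
      simpa using this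
    have h5 : theta C i = S.card := rfl
    by_cases hpar : Even n
    · simp only [hpar, if_true]; omega
    · simp only [hpar, if_false]
      -- odd case: show T false ∪ T true ≠ univ
      rcases Nat.lt_or_ge ((T false).card + (T true).card) n with hlt | hge
      · omega
      · exfalso
        have hequn : (T false) ∪ (T true) = Finset.univ := by
          apply Finset.eq_univ_of_card
          rw [Finset.card_union_of_disjoint hdisj']
          simp; omega
        have hall : ∀ j : Fin n, j ∈ T false ∨ j ∈ T true := by
          intro j
          have : j ∈ (T false) ∪ (T true) := hequn ▸ Finset.mem_univ j
          exact Finset.mem_union.mp this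
        -- parity flip on P i := ⟨i % n⟩ ∈ T true
        have hodd : n % 2 = 1 := Nat.odd_iff.mp (Nat.not_even_iff_odd.mp hpar)
        have npos : 0 < n := by omega
        refine parity_flip (fun i => (⟨i % n, Nat.mod_lt _ npos⟩ : Fin n) ∈ T true)
          ?_ n ?_ hodd
        · intro m
          show ((⟨m % n, Nat.mod_lt _ npos⟩ : Fin n) ∈ T true) ↔
            ¬ ((⟨(m + 1) % n, Nat.mod_lt _ npos⟩ : Fin n) ∈ T true)
          set j : Fin n := ⟨m % n, Nat.mod_lt _ npos⟩ with hj
          set j' : Fin n := ⟨(m + 1) % n, Nat.mod_lt _ npos⟩ with hj'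
          have hsucc : j'.val = (j.val + 1) % n := by
            show (m + 1) % n = (m % n + 1) % n
            rw [Nat.add_mod m 1 n, Nat.mod_eq_of_lt (show 1 < n by omega)]
          constructor
          · intro h1 h2
            exact hind _ ((hTmem true j).mp h1) _ ((hTmem true j').mp h2)
              (adj_outer_outer (by omega) _ _ hsucc)
          · intro h2
            rcases hall j with h1 | h1
            · rcases hall j' with h1' | h1'
              · exact absurd (adj_rim_rim (by omega) _ _ hsucc)
                  (fun hadj => hind _ ((hTmem false j).mp h1) _ ((hTmem false j').mp h1') hadj)
              · exact absurd h1' h2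
            · exact h1
        · show ((⟨n % n, Nat.mod_lt _ npos⟩ : Fin n) ∈ T true) ↔
            ((⟨0 % n, Nat.mod_lt _ npos⟩ : Fin n) ∈ T true)
          have heq : (⟨n % n, Nat.mod_lt _ npos⟩ : Fin n) = ⟨0 % n, Nat.mod_lt _ npos⟩ := by
            apply Fin.ext; simp
          rw [heq]

lemma colors_ge_three {n k : ℕ} (hn : 3 ≤ n) (C : Option (Fin n × Bool) → Fin k)
    (hC : IsProperColoring (closedHelmG n) C) : 3 ≤ k := by
  set r0 : Option (Fin n × Bool) := some (⟨0, by omega⟩, false)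
  set r1 : Option (Fin n × Bool) := some (⟨1, by omega⟩, false)
  have h01 : (closedHelmG n).Adj r0 r1 :=
    adj_rim_rim (by omega) _ _ (by
      show (1 : ℕ) = (0 + 1) % n
      rw [Nat.mod_eq_of_lt (by omega)])
  have ha := hC (adj_hub_rim (⟨0, by omega⟩ : Fin n))
  have hb := hC (adj_hub_rim (⟨1, by omega⟩ : Fin n))
  have hc := hC h01
  have h1 : (C none).val ≠ (C r0).val := fun h => ha (Fin.ext h)
  have h2 : (C none).val ≠ (C r1).val := fun h => hb (Fin.ext h)
  have h3 : (C r0).val ≠ (C r1).val := fun h => hc (Fin.ext h)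
  have := (C none).isLt; have := (C r0).isLt; have := (C r1).isLt
  omega

lemma colors_ge_four {n k : ℕ} (hn : 3 ≤ n) (hpar : ¬ Even n)
    (C : Option (Fin n × Bool) → Fin k)
    (hC : IsProperColoring (closedHelmG n) C) : 4 ≤ k := by
  by_contra hk
  push_neg at hk
  have hodd : n % 2 = 1 := Nat.odd_iff.mp (Nat.not_even_iff_odd.mp hpar)
  have npos : 0 < n := by omega
  set A : ℕ → ℕ := fun i => (C (some (⟨i % n, Nat.mod_lt _ npos⟩, false))).val with hA
  have hbnd : ∀ i, A i < 3 := by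
    intro i
    have := (C (some (⟨i % n, Nat.mod_lt _ npos⟩, false))).isLt
    simp only [hA]; omega
  refine parity_num A ((C none).val) hbnd
    (by have := (C none).isLt; omega) ?_ ?_ n ?_ hodd
  · intro i
    intro h
    exact hC (adj_hub_rim (⟨i % n, Nat.mod_lt _ npos⟩ : Fin n)) (Fin.ext h).symm
  · intro i
    intro h
    have hadj := adj_rim_rim (n := n) (by omega) ⟨i % n, Nat.mod_lt _ npos⟩
      ⟨(i + 1) % n, Nat.mod_lt _ npos⟩ (by
        show (i + 1) % n = (i % n + 1) % n
        rw [Nat.add_mod i 1 n, Nat.mod_eq_of_lt (show 1 < n by omega)])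
    exact hC hadj (Fin.ext h)
  · show (C (some (⟨n % n, _⟩, false))).val = (C (some (⟨0 % n, _⟩, false))).val
    have heq : (⟨n % n, Nat.mod_lt _ npos⟩ : Fin n) = ⟨0 % n, Nat.mod_lt _ npos⟩ := by
      apply Fin.ext; simp
    rw [heq]

-- class size lower bounds

lemma evenColoring_big {n : ℕ} (hn : 3 ≤ n) : n ≤ theta (evenColoring n) 0 := by
  classical
  have := Finset.card_le_card_of_injOn
    (f := fun j : Fin n => if j.val % 2 = 0 then (some (j, false) : Option (Fin n × Bool))
      else some (j, true))
    (s := Finset.univ) (t := Finset.univ.filter fun v => evenColoring n v = 0)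
    ?_ ?_
  · simpa [theta] using this
  · intro j _
    rw [Finset.mem_coe, Finset.mem_filter]
    refine ⟨Finset.mem_univ _, ?_⟩
    by_cases hj : j.val % 2 = 0 <;> simp [hj, evenColoring]
  · intro a _ b _ hab
    by_cases ha : a.val % 2 = 0 <;> by_cases hb : b.val % 2 = 0 <;>
      simp [ha, hb] at hab <;> first | (exact hab.1) | (exact hab) | (exact absurd hab rfl)

lemma oddColoring_big {n : ℕ} (hn : 3 ≤ n) : n - 1 ≤ theta (oddColoring n) 0 := by
  classical
  have := Finset.card_le_card_of_injOn
    (f := fun j : Fin (n - 1) =>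
      if j.val % 2 = 0 then (some (⟨j.val, by omega⟩, false) : Option (Fin n × Bool))
      else some (⟨j.val, by omega⟩, true))
    (s := Finset.univ) (t := Finset.univ.filter fun v => oddColoring n v = 0)
    ?_ ?_
  · simpa [theta] using this
  · intro j _
    rw [Finset.mem_coe, Finset.mem_filter]
    refine ⟨Finset.mem_univ _, ?_⟩
    have hj1 : j.val < n - 1 := j.isLt
    by_cases hj : j.val % 2 = 0 <;>
      simp [hj, oddColoring, show j.val ≠ n - 1 by omega] <;> omega
  · intro a _ b _ hab
    have h1 : a.val < n - 1 := a.isLt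
    have h2 : b.val < n - 1 := b.isLt
    by_cases ha : a.val % 2 = 0 <;> by_cases hb : b.val % 2 = 0 <;>
      simp [ha, hb] at hab <;>
      first | (exact Fin.ext (by omega)) | (apply Fin.ext; omega) | (exfalso; omega)

lemma classSizesDesc_length {V : Type*} [Fintype V] {k : ℕ} (C : V → Fin k) :
    (classSizesDesc C).length = k := by
  simp [classSizesDesc, List.length_insertionSort]

lemma classSizesDesc_mem {V : Type*} [Fintype V] {k : ℕ} (C : V → Fin k) {x : ℕ}
    (hx : x ∈ classSizesDesc C) : ∃ i, theta C i = x := by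
  rw [classSizesDesc, List.mem_reverse, (List.perm_insertionSort _ _).mem_iff,
    List.mem_ofFn] at hx
  exact hx

lemma theta_mem_classSizesDesc {V : Type*} [Fintype V] {k : ℕ} (C : V → Fin k) (i : Fin k) :
    theta C i ∈ classSizesDesc C := by
  rw [classSizesDesc, List.mem_reverse, (List.perm_insertionSort _ _).mem_iff,
    List.mem_ofFn]
  exact ⟨i, rfl⟩

lemma classSizesDesc_sorted {V : Type*} [Fintype V] {k : ℕ} (C : V → Fin k) :
    (classSizesDesc C).Pairwise (fun a b => b ≤ a) := by
  rw [classSizesDesc, List.pairwise_reverse]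
  exact List.pairwise_insertionSort _ _

lemma final_glue {V : Type*} [Fintype V] {G : SimpleGraph V}
    (C : V → Fin (chi G)) (hC : IsChiMinusColoring G C) (m : ℕ)
    (hub : ∀ (C' : V → Fin (chi G)), IsProperColoring G C' → ∀ i, theta C' i ≤ m)
    (D : V → Fin (chi G)) (hD : IsProperColoring G D) (i0 : Fin (chi G))
    (hbig : m ≤ theta D i0) (hk : 0 < chi G) :
    Finset.univ.sup (theta C) = m := by
  classical
  have hle : Finset.univ.sup (theta C) ≤ m :=
    Finset.sup_le (fun i _ => hub C hC.1 i)
  rcases eq_or_lt_of_le hle with h | h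
  · exact h
  exfalso
  have hall : ∀ i, theta C i < m :=
    fun i => lt_of_le_of_lt (Finset.le_sup (Finset.mem_univ i)) h
  apply hC.2 D hD
  have hlenC := classSizesDesc_length C
  have hlenD := classSizesDesc_length D
  cases h1C : classSizesDesc C with
  | nil => rw [h1C] at hlenC; simp at hlenC; omega
  | cons hc tc =>
    cases h1D : classSizesDesc D with
    | nil => rw [h1D] at hlenD; simp at hlenD; omega
    | cons hd td =>
      have hmemc : hc ∈ classSizesDesc C := by rw [h1C]; exact List.mem_cons_self
      obtain ⟨i, hi⟩ := classSizesDesc_mem C hmemc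
      have hcm : hc < m := hi ▸ hall i
      have hdm : m ≤ hd := by
        have hmem := theta_mem_classSizesDesc D i0
        rw [h1D] at hmem
        rcases List.mem_cons.mp hmem with h' | h'
        · omega
        · have hso := classSizesDesc_sorted D
          rw [h1D] at hso
          have := (List.pairwise_cons.mp hso).1 _ h'
          omega
      exact List.Lex.rel (by omega)

theorem closedHelmGraph_chromaticCurlingNumber (n : ℕ) (hn : 3 ≤ n)
    (C : Option (Fin n × Bool) → Fin (chi (closedHelmG n)))
    (hC : IsChiMinusColoring (closedHelmG n) C) :
    Finset.univ.sup (theta C) = if Even n then n else n - 1 := by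
  classical
  by_cases hpar : Even n
  · rw [if_pos hpar]
    have hk3 : 3 ≤ chi (closedHelmG n) := colors_ge_three hn C hC.1
    set D : Option (Fin n × Bool) → Fin (chi (closedHelmG n)) :=
      fun v => Fin.castLE hk3 (evenColoring n v) with hD
    have hDp : IsProperColoring (closedHelmG n) D := by
      intro v w hadj he
      exact evenColoring_proper hn hpar hadj (Fin.castLE_injective hk3 he)
    have hDbig : n ≤ theta D (Fin.castLE hk3 0) := by
      have heq : theta D (Fin.castLE hk3 0) = theta (evenColoring n) 0 := by
        unfold theta
        congr 1
        apply Finset.filter_congr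
        intro v _
        simp only [hD]
        exact ⟨fun h => Fin.castLE_injective hk3 h, fun h => by rw [h]⟩
      rw [heq]
      exact evenColoring_big hn
    refine final_glue C hC n ?_ D hDp _ hDbig (by omega)
    intro C' hC' i
    have := indep_bound hn C' hC' i
    rwa [if_pos hpar] at this
  · rw [if_neg hpar]
    have hk4 : 4 ≤ chi (closedHelmG n) := colors_ge_four hn hpar C hC.1
    set D : Option (Fin n × Bool) → Fin (chi (closedHelmG n)) :=
      fun v => Fin.castLE hk4 (oddColoring n v) with hD
    have hDp : IsProperColoring (closedHelmG n) D := by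
      intro v w hadj he
      exact oddColoring_proper hn hpar hadj (Fin.castLE_injective hk4 he)
    have hDbig : n - 1 ≤ theta D (Fin.castLE hk4 0) := by
      have heq : theta D (Fin.castLE hk4 0) = theta (oddColoring n) 0 := by
        unfold theta
        congr 1
        apply Finset.filter_congr
        intro v _
        simp only [hD]
        exact ⟨fun h => Fin.castLE_injective hk4 h, fun h => by rw [h]⟩
      rw [heq]
      exact oddColoring_big hn
    refine final_glue C hC (n - 1) ?_ D hDp _ hDbig (by omega)
    intro C' hC' i
    have := indep_bound hn C' hC' i
    rwa [if_neg hpar] at this
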